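/- arXiv:1005.2616 — 2 statements merged into one kernel-verified Lean document; each statement's English description precedes it below -/
import Mathlib

section
/- If m chains of length ℓ are allocated to n bins arranged cyclically, then for any integer i ≥ 1, the number of bins j such that an allocation of a chain header to bin j would increase the load of some bin already of load at least i satisfies θ_{≥i}(m) ≤ 2mℓ/i. -/
/-!
Pick for every bin `b` of `S_i` an offset `κ b < ℓ` such that bin `b + κ b` has load at least `i`,
and count the pairs `(b, occupant of b + κ b)`: there are at least `i * |S_i|` of them. An occupant
is a chain `c` together with the position `p < ℓ` at which it covers `b + κ b`, so
`b = h c + (p - κ b)`; hence `(b, c, p) ↦ (c, p - κ b)` is injective, and `p - κ b` takes only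
the `2ℓ - 1` integer values strictly between `-ℓ` and `ℓ`.
-/

open Finset

namespace ChainsIntoBins

variable {G ι : Type*} [AddGroupWithOne G] [DecidableEq G] [Fintype ι] (h : ι → G) (ℓ : ℕ)

def occupants (x : G) : Finset (ι × Fin ℓ) :=
  {p | h p.1 + ((p.2 : ℕ) : G) = x}

def heavyReach [Fintype G] (i : ℕ) : Finset G :=
  {b | ∃ k : Fin ℓ, i ≤ #(occupants h ℓ (b + ((k : ℕ) : G)))}

variable {h ℓ}

theorem eq_add_intCast_of_mem_occupants {b : G} {k : ℕ} {p : ι × Fin ℓ}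
    (hp : p ∈ occupants h ℓ (b + k)) : b = h p.1 + (((p.2 : ℕ) - k : ℤ) : G) := by
  rw [occupants, mem_filter] at hp
  rw [Int.cast_sub, Int.cast_natCast, Int.cast_natCast, ← add_sub_assoc, hp.2,
    add_sub_cancel_right]

theorem card_sigma_occupants_le (T : Finset G) (κ : G → ℕ) (hκ : ∀ b ∈ T, κ b < ℓ) :
    #(T.sigma fun b => occupants h ℓ (b + κ b)) ≤ Fintype.card ι * (2 * ℓ - 1) := by
  have hcard : #(univ ×ˢ Ioo (-ℓ : ℤ) ℓ : Finset (ι × ℤ)) = Fintype.card ι * (2 * ℓ - 1) := by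
    rw [card_product, card_univ, Int.card_Ioo]
    congr 1
    omega
  rw [← hcard]
  refine card_le_card_of_injOn (fun x => (x.2.1, ((x.2.2 : ℕ) - κ x.1 : ℤ))) ?_ ?_
  · rintro ⟨b, c, p⟩ hx
    have hκb := hκ b (mem_sigma.1 hx).1
    simp only [coe_product, coe_univ, coe_Ioo, Set.mem_prod, Set.mem_univ, Set.mem_Ioo, true_and]
    omega
  · rintro ⟨b₁, c₁, p₁⟩ hx₁ ⟨b₂, c₂, p₂⟩ hx₂ heq
    simp only [Prod.mk.injEq] at heq
    obtain ⟨rfl, hd⟩ := heq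
    have hb : b₁ = b₂ := by
      have e₁ : b₁ = _ := eq_add_intCast_of_mem_occupants (mem_sigma.1 hx₁).2
      have e₂ : b₂ = _ := eq_add_intCast_of_mem_occupants (mem_sigma.1 hx₂).2
      rw [e₁, e₂]
      simp only [hd]
    subst hb
    have hp : p₁ = p₂ := Fin.ext (by omega)
    rw [hp]

theorem mul_card_heavyReach_le [Fintype G] (i : ℕ) :
    i * #(heavyReach h ℓ i) ≤ Fintype.card ι * (2 * ℓ - 1) := by
  have hreach : ∀ b ∈ heavyReach h ℓ i, ∃ k : ℕ, k < ℓ ∧ i ≤ #(occupants h ℓ (b + k)) := by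
    intro b hb
    obtain ⟨k, hk⟩ := (mem_filter.1 hb).2
    exact ⟨k, k.2, hk⟩
  choose! κ hκℓ hκi using hreach
  calc i * #(heavyReach h ℓ i)
      ≤ ∑ b ∈ heavyReach h ℓ i, #(occupants h ℓ (b + κ b)) := by
        rw [mul_comm, ← smul_eq_mul]
        exact card_nsmul_le_sum _ _ _ hκi
    _ = #((heavyReach h ℓ i).sigma fun b => occupants h ℓ (b + κ b)) := (card_sigma _ _).symm
    _ ≤ Fintype.card ι * (2 * ℓ - 1) := card_sigma_occupants_le _ κ hκℓ

end ChainsIntoBins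

theorem chains_into_bins_theta_le_general (n m ℓ : ℕ) [NeZero n] (i : ℕ)
    (h : Fin m → ZMod n) :
    i * (Finset.univ.filter (fun b : ZMod n =>
        ∃ k : Fin ℓ, i ≤ (Finset.univ.filter (fun p : Fin m × Fin ℓ =>
          h p.1 + ((p.2 : ℕ) : ZMod n) = b + ((k : ℕ) : ZMod n))).card)).card
      ≤ 2 * m * ℓ :=
  calc _ ≤ Fintype.card (Fin m) * (2 * ℓ - 1) := ChainsIntoBins.mul_card_heavyReach_le (h := h) i
    _ ≤ 2 * m * ℓ := by
      rw [Fintype.card_fin]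
      calc m * (2 * ℓ - 1) ≤ m * (2 * ℓ) := Nat.mul_le_mul_left m (Nat.sub_le _ _)
        _ = 2 * m * ℓ := by ring

/-- For m chains of length ℓ allocated cyclically to n bins (header of
chain `c` at bin `h c`, occupying bins `h c, h c + 1, ..., h c + ℓ - 1`), for any
`i ≥ 1` the set `S_i` of bins whose receipt of a chain header would increase the load
of some bin of load at least `i` satisfies `θ_{≥i}(m) = |S_i| ≤ 2mℓ/i`. -/
theorem chains_into_bins_theta_le (n m ℓ : ℕ) [NeZero n] (i : ℕ) (hi : 1 ≤ i)
    (h : Fin m → ZMod n) :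
    i * (Finset.univ.filter (fun b : ZMod n =>
        ∃ k : Fin ℓ, i ≤ (Finset.univ.filter (fun p : Fin m × Fin ℓ =>
          h p.1 + ((p.2 : ℕ) : ZMod n) = b + ((k : ℕ) : ZMod n))).card)).card
      ≤ 2 * m * ℓ :=
  chains_into_bins_theta_le_general n m ℓ i h
end

section
/- If m ≤ n/(2e) balls are thrown independently and uniformly at random into n bins, then the expected number of occupied (nonempty) bins, which equals n(1 - (1 - 1/n)^m), is at least 0.9m. -/
/-!
Comparing with the Poisson approximation, `(1 - 1/n)^m ≤ exp (-m/n)`, and the alternating Taylor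
bound `exp (-x) ≤ 1 - x + x²/2` gives `n (1 - (1 - 1/n)^m) ≥ m (1 - m/(2n))`. Under
`m ≤ n/(2e)` the loss factor `m/(2n)` is at most `1/(4e) < 0.1`.
-/

open Real

lemma Real.exp_neg_le_one_sub_add_sq_div_two {x : ℝ} (hx : 0 ≤ x) :
    exp (-x) ≤ 1 - x + x ^ 2 / 2 := by
  have hpos : 0 < 1 + x + x ^ 2 / 2 := by positivity
  calc exp (-x) = (exp x)⁻¹ := exp_neg x
    _ ≤ (1 + x + x ^ 2 / 2)⁻¹ := inv_anti₀ hpos (quadratic_le_exp_of_nonneg hx)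
    _ ≤ 1 - x + x ^ 2 / 2 := by
      rw [inv_le_iff_one_le_mul₀' hpos]
      nlinarith [sq_nonneg (x ^ 2)]

lemma one_sub_inv_pow_le_exp_neg (n m : ℕ) :
    (1 - 1 / (n : ℝ)) ^ m ≤ exp (-(m / n)) := by
  rcases Nat.eq_zero_or_pos n with rfl | hn
  · simp
  have hbase : 0 ≤ 1 - 1 / (n : ℝ) := by
    rw [sub_nonneg, div_le_one (by positivity)]
    exact_mod_cast hn
  calc (1 - 1 / (n : ℝ)) ^ m ≤ exp (-(1 / n)) ^ m := by
        gcongr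
        simpa using one_sub_le_exp_neg (1 / (n : ℝ))
    _ = exp (-(m / n)) := by
        rw [← exp_nat_mul]
        ring_nf

lemma sub_sq_div_le_mul_one_sub_one_sub_inv_pow {n : ℕ} (hn : n ≠ 0) (m : ℕ) :
    (m : ℝ) - m ^ 2 / (2 * n) ≤ n * (1 - (1 - 1 / (n : ℝ)) ^ m) := by
  have hnpos : (0 : ℝ) < n := by positivity
  have hpow := (one_sub_inv_pow_le_exp_neg n m).trans
    (exp_neg_le_one_sub_add_sq_div_two (x := m / n) (by positivity))
  calc (m : ℝ) - m ^ 2 / (2 * n) = n * (1 - (1 - m / n + (m / n) ^ 2 / 2)) := by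
        field_simp
        ring
    _ ≤ n * (1 - (1 - 1 / (n : ℝ)) ^ m) := by gcongr

theorem expected_occupied_bins_general (n m : ℕ)
    (hm : (m : ℝ) ≤ (n : ℝ) / (2 * Real.exp 1)) :
    0.9 * (m : ℝ) ≤ (n : ℝ) * (1 - (1 - 1 / (n : ℝ)) ^ m) := by
  rcases Nat.eq_zero_or_pos n with rfl | hn
  · have : m = 0 := by exact_mod_cast le_antisymm (by simpa using hm) m.cast_nonneg
    simp [this]
  have hnpos : (0 : ℝ) < n := by positivity
  have hratio : (m : ℝ) ≤ 0.2 * n := by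
    have he := exp_one_gt_d9
    calc (m : ℝ) ≤ n / (2 * exp 1) := hm
      _ ≤ 0.2 * n := by
        rw [div_le_iff₀ (by positivity)]
        nlinarith
  have hloss : (m : ℝ) ^ 2 / (2 * n) ≤ 0.1 * m := by
    rw [div_le_iff₀ (by positivity)]
    nlinarith [m.cast_nonneg (α := ℝ)]
  linarith [sub_sq_div_le_mul_one_sub_one_sub_inv_pow hn.ne' m]

/-- if m ≤ n/(2e) balls are thrown i.u.r. into n bins, the expected number of
occupied bins, n(1 - (1 - 1/n)^m), is at least 0.9m. -/
theorem expected_occupied_bins (n m : ℕ) (hn : 1 ≤ n)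
    (hm : (m : ℝ) ≤ (n : ℝ) / (2 * Real.exp 1)) :
    0.9 * (m : ℝ) ≤ (n : ℝ) * (1 - (1 - 1 / (n : ℝ)) ^ m) :=
  expected_occupied_bins_general n m hm
end
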